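/- The interval topology T_in^≪ on 2-dimensional Minkowski space, generated by the subbasis of complements M∖I⁺(x) and M∖I⁻(x) of chronological future and past cones, is incomparable with the Euclidean topology: neither topology is contained in the other. -/

import Mathlib

/-- Minkowski quadratic form on ℝ². -/
def Q (v : ℝ × ℝ) : ℝ := v.1 ^ 2 - v.2 ^ 2

def Chron (x y : ℝ × ℝ) : Prop := Q (y - x) > 0 ∧ (y - x).1 > 0

/-- The interval topology generated by complements of chronological cones. -/
def Tin : TopologicalSpace (ℝ × ℝ) :=
  TopologicalSpace.generateFrom
    ({S : Set (ℝ × ℝ) | ∃ x, S = {z | Chron x z}ᶜ} ∪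
      {S : Set (ℝ × ℝ) | ∃ x, S = {z | Chron z x}ᶜ})

/-!
Far up the vertical (spacelike) line through `p`, points are chronologically unrelated to any fixed
`x`, so they eventually lie in every subbasic `Tin`-open set containing `p`: the vertical ray
converges to `p` in `Tin`, and `Tin`-neighbourhoods are unbounded, so a Euclidean ball is not
`Tin`-open. Conversely `I⁺(x)` is Euclidean-open, nonempty and proper, so by connectedness of `ℝ²`
its `Tin`-open complement is not Euclidean-open.
-/

open Filter Set Topology

lemma Q_neg (v : ℝ × ℝ) : Q (-v) = Q v := by
  simp [Q]

lemma eventually_Q_add_vertical_neg (v : ℝ × ℝ) :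
    ∀ᶠ t in atTop, Q (v + (0, t)) < 0 := by
  filter_upwards [eventually_gt_atTop (|v.1| - v.2)] with t ht
  have hsq : v.1 ^ 2 < (v.2 + t) ^ 2 :=
    sq_lt_sq' (by linarith [neg_abs_le v.1]) (by linarith [le_abs_self v.1])
  simp only [Q, Prod.fst_add, Prod.snd_add, add_zero]
  linarith

lemma Q_sub_pos_of_chron {x z : ℝ × ℝ} (h : Chron x z ∨ Chron z x) : 0 < Q (z - x) := by
  rcases h with h | h
  · exact h.1
  · have hQ := h.1
    rwa [← neg_sub, Q_neg] at hQ

lemma tendsto_add_vertical_nhds_Tin (p : ℝ × ℝ) :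
    Tendsto (fun t : ℝ => p + (0, t)) atTop (@nhds _ Tin p) := by
  rw [Tin, TopologicalSpace.nhds_generateFrom]
  simp only [tendsto_iInf, tendsto_principal]
  rintro s ⟨-, ⟨x, rfl⟩ | ⟨x, rfl⟩⟩ <;>
  · filter_upwards [eventually_Q_add_vertical_neg (p - x)] with t ht hchron
    have := Q_sub_pos_of_chron (x := x) (z := p + (0, t)) (by tauto)
    rw [add_sub_right_comm] at this
    linarith

lemma not_isBounded_of_mem_nhds_Tin {p : ℝ × ℝ} {S : Set (ℝ × ℝ)} (hS : S ∈ @nhds _ Tin p) :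
    ¬ Bornology.IsBounded S := by
  intro hb
  obtain ⟨r, hr⟩ := hb.subset_closedBall p
  obtain ⟨t, htS, htr⟩ :=
    ((tendsto_add_vertical_nhds_Tin p).eventually hS |>.and (eventually_gt_atTop r)).exists
  have : dist (p + (0, t)) p ≤ r := hr htS
  rw [dist_self_add_left, Prod.norm_mk, norm_zero, Real.norm_eq_abs] at this
  linarith [le_abs_self t, le_max_right 0 |t|]

lemma isOpen_chronFuture (x : ℝ × ℝ) : IsOpen {z | Chron x z} := by
  have hsub : Continuous fun z : ℝ × ℝ => z - x := by fun_prop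
  have hQ : Continuous Q := by unfold Q; fun_prop
  exact (isOpen_lt continuous_const (hQ.comp hsub)).inter (isOpen_lt continuous_const hsub.fst)

lemma not_isClosed_chronFuture (x : ℝ × ℝ) : ¬ IsClosed {z | Chron x z} := by
  intro hclosed
  rcases isClopen_iff.mp ⟨hclosed, isOpen_chronFuture x⟩ with h | h
  · have : x + (1, 0) ∈ {z | Chron x z} := by simp [Chron, Q]
    simp [h] at this
  · have : x ∈ {z | Chron x z} := h ▸ mem_univ x
    simp [Chron] at this

theorem interval_incomparable_euclidean :
    ¬ (Tin ≤ (inferInstance : TopologicalSpace (ℝ × ℝ))) ∧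
    ¬ ((inferInstance : TopologicalSpace (ℝ × ℝ)) ≤ Tin) := by
  constructor
  · intro h
    have hball : Metric.ball (0 : ℝ × ℝ) 1 ∈ @nhds _ Tin 0 :=
      @IsOpen.mem_nhds _ Tin _ _ (h _ Metric.isOpen_ball) (Metric.mem_ball_self one_pos)
    exact not_isBounded_of_mem_nhds_Tin hball Metric.isBounded_ball
  · intro h
    have hTin : IsOpen[Tin] {z | Chron 0 z}ᶜ :=
      TopologicalSpace.isOpen_generateFrom_of_mem (Or.inl ⟨0, rfl⟩)
    exact not_isClosed_chronFuture 0 (isOpen_compl_iff.mp (h _ hTin))
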